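/- (Scaling limits of discrete regular functions are regular.) Let B ⊂ ℝ^8 be a bounded open set and for each h > 0 let B^h ⊆ ℤ^8_h, such that B^h converges to B as h → 0. Let f : B → 𝕆 be continuously differentiable, and suppose for each h > 0 there is f^h : ℤ^8_h → 𝕆 with D^h f^h(y) = 0 for every y in the discrete interior (B^h)°, such that sup_{x ∈ B^h ∩ B} ‖f(x) − f^h(x)‖ → 0 as h → 0. Then Df = 0 on B, i.e. f is regular on B. -/

import Mathlib

open MeasureTheory Real Filter Topology
open scoped BigOperators

noncomputable section

/-- The octonions, as the Euclidean space `ℝ^8`. -/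
abbrev Oct : Type := EuclideanSpace ℝ (Fin 8)

/-- The unit lattice `ℤ^8`. -/
abbrev Lat8 : Type := Fin 8 → ℤ

/-- The standard basis `e_0, …, e_7` of the octonions. -/
def octBasis (l : Fin 8) : Oct := EuclideanSpace.single l 1

/-- The distinguished triples where the antisymmetric tensor `ε` equals 1. -/
def tripleList : List (Fin 8 × Fin 8 × Fin 8) :=
  [(1,2,3),(1,4,5),(1,7,6),(2,4,6),(2,5,7),(3,4,7),(3,6,5)]

/-- The totally antisymmetric tensor `ε_{ijk}`. -/
def eps (i j k : Fin 8) : ℝ :=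
  if (i,j,k) ∈ tripleList ∨ (j,k,i) ∈ tripleList ∨ (k,i,j) ∈ tripleList then 1
  else if (i,k,j) ∈ tripleList ∨ (k,j,i) ∈ tripleList ∨ (j,i,k) ∈ tripleList then -1
  else 0

/-- Structure constants of octonion multiplication: coefficient of `e_k` in `e_i e_j`. -/
def structC (i j k : Fin 8) : ℝ :=
  if i = 0 then (if k = j then 1 else 0)
  else if j = 0 then (if k = i then 1 else 0)
  else if k = 0 then (if i = j then -1 else 0)
  else eps i j k

/-- Octonion multiplication. -/
def octMul (x y : Oct) : Oct :=
  WithLp.toLp 2 (fun k => ∑ i : Fin 8, ∑ j : Fin 8, x i * y j * structC i j k)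

/-- Octonion conjugation `x̄`. -/
def octConj (x : Oct) : Oct := WithLp.toLp 2 (fun k => if k = 0 then x 0 else -x k)

/-- The standard basis vector of the integer lattice. -/
def unitL (l : Fin 8) : Lat8 := fun k => if k = l then 1 else 0

/-- The embedding of `ℤ^8_h = (hℤ)^8` into `ℝ^8 = 𝕆`. -/
def toOct (h : ℝ) (x : Lat8) : Oct := WithLp.toLp 2 (fun k => h * (x k : ℝ))

section diffs
variable {V : Type*} [AddCommGroup V] [Module ℝ V]

/-- Forward difference `∂_l^{+,h}` (on functions of the integer lattice, mesh `h`). -/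
def fdiff (h : ℝ) (f : Lat8 → V) (l : Fin 8) (x : Lat8) : V := h⁻¹ • (f (x + unitL l) - f x)

/-- Backward difference `∂_l^{-,h}`. -/
def bdiff (h : ℝ) (f : Lat8 → V) (l : Fin 8) (x : Lat8) : V := h⁻¹ • (f x - f (x - unitL l))

/-- Central difference `∂_l^h`. -/
def cdiff (h : ℝ) (f : Lat8 → V) (l : Fin 8) (x : Lat8) : V :=
  (2:ℝ)⁻¹ • (fdiff h f l x + bdiff h f l x)

end diffs

/-- The discrete Dirac (Cauchy–Fueter) operator `D^h`. -/
def DiracD (h : ℝ) (f : Lat8 → Oct) (x : Lat8) : Oct :=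
  ∑ l : Fin 8, octMul (octBasis l) (cdiff h f l x)

/-- Indicator function `χ_B`. -/
def chi (B : Set Lat8) : Lat8 → ℝ := B.indicator fun _ => 1

/-- The discrete neighbourhood `N(x) = {x, x ± he_0, …, x ± he_7}` (integer coordinates). -/
def nbhdSet (x : Lat8) : Set Lat8 := {x} ∪ ⋃ l : Fin 8, {x + unitL l, x - unitL l}

/-- The discrete boundary of a set of lattice points. -/
def dBdryS (S : Set Lat8) : Set Lat8 :=
  {x | (nbhdSet x ∩ S).Nonempty ∧ (nbhdSet x ∩ Sᶜ).Nonempty}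

/-- The discrete interior `S° = S ∖ ∂S`. -/
def dIntS (S : Set Lat8) : Set Lat8 := S \ dBdryS S

/-- The discrete neighbourhood as a finset. -/
def nbhdF (x : Lat8) : Finset Lat8 :=
  insert x ((Finset.univ : Finset (Fin 8)).biUnion fun l => {x + unitL l, x - unitL l})

/-- The discrete boundary of a finite set of lattice points, as a finset. -/
def bdryF (B : Finset Lat8) : Finset Lat8 :=
  @Finset.filter _ (fun x => x ∈ dBdryS (↑B : Set Lat8)) (Classical.decPred _)
    (B.biUnion nbhdF)

/-- The quantity `Σ_l [(∂_l^{+,h}χ_B)² + (∂_l^{-,h}χ_B)²]`. -/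
def wfun (h : ℝ) (B : Finset Lat8) (x : Lat8) : ℝ :=
  ∑ l : Fin 8, ((fdiff h (chi ↑B) l x)^2 + (bdiff h (chi ↑B) l x)^2)

/-- The discrete boundary measure density `s(x)`, extended by `0` off `∂B`. -/
def sfun (h : ℝ) (B : Finset Lat8) : Lat8 → ℝ :=
  (dBdryS (↑B : Set Lat8)).indicator fun x => (h^8/2) * Real.sqrt (wfun h B x)

/-- The outward normal component `n_l^{+}(x)`, extended by `0` off `∂B`. -/
def nplus (h : ℝ) (B : Finset Lat8) (l : Fin 8) : Lat8 → ℝ :=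
  (dBdryS (↑B : Set Lat8)).indicator fun x =>
    (-2 * fdiff h (chi ↑B) l x) / Real.sqrt (wfun h B x)

/-- The outward normal component `n_l^{-}(x)`, extended by `0` off `∂B`. -/
def nminus (h : ℝ) (B : Finset Lat8) (l : Fin 8) : Lat8 → ℝ :=
  (dBdryS (↑B : Set Lat8)).indicator fun x =>
    (-2 * bdiff h (chi ↑B) l x) / Real.sqrt (wfun h B x)

/-- The cube `[-π,π]^8`. -/
def cube : Set (Fin 8 → ℝ) := Set.univ.pi fun _ => Set.Icc (-Real.pi) Real.pi

/-- The `l`-th (complex) coefficient integral of the discrete fundamental solution `E¹`. -/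
def E1coeff (l : Fin 8) (x : Lat8) : ℂ :=
  -((((2*Real.pi)^8 : ℝ) : ℂ))⁻¹ *
    ∫ u in cube,
      (Complex.I * ((Real.sin (u l) : ℝ) : ℂ) / (((∑ m : Fin 8, (Real.sin (u m))^2 : ℝ)) : ℂ)) *
        Complex.exp (Complex.I * (((∑ m : Fin 8, u m * (x m : ℝ)) : ℝ) : ℂ))

/-- The sign of the conjugate basis vector `ē_l` relative to `e_l`. -/
def ebarSign (l : Fin 8) : ℝ := if l = 0 then 1 else -1

/-- The discrete fundamental solution `E¹` on the unit lattice (each coefficient of the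
defining integral is real, so `E¹` is octonion-valued). -/
def E1 (x : Lat8) : Oct := WithLp.toLp 2 (fun l => ebarSign l * (E1coeff l x).re)

/-- The discrete fundamental solution `E^h(x) = h^{-7} E¹(x/h)` (integer coordinates). -/
def Eh (h : ℝ) (x : Lat8) : Oct := (h^7)⁻¹ • E1 x

/-- The discrete Dirac delta `δ_0^h`. -/
def deltah (h : ℝ) (x : Lat8) : ℝ := if x = 0 then (h^8)⁻¹ else 0

/-- The star product `K^h(x,y) ∗ a`. -/
def Kstar (h : ℝ) (B : Finset Lat8) (x y : Lat8) (a : Oct) : Oct :=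
  -((2:ℝ)⁻¹ • ∑ l : Fin 8,
    octMul (nminus h B l x • Eh h (unitL l - x + y) + nplus h B l x • Eh h (-unitL l - x + y))
      (octMul (octBasis l) a))

/-- The discrete Cauchy–Bitsadze operator `C^h_{∂B}`. -/
def CauchyOp (h : ℝ) (B : Finset Lat8) (f : Lat8 → Oct) (y : Lat8) : Oct :=
  ∑ x ∈ bdryF B, sfun h B x • Kstar h B x y (f x)

/-- The discrete Teodorescu operator `T^h_B`. -/
def Teo (h : ℝ) (B : Finset Lat8) (f : Lat8 → Oct) (y : Lat8) : Oct :=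
  (h^8 : ℝ) • ∑ x ∈ B, octMul (Eh h (y - x)) (f x)

/-- The singular integral operator `S^h_{∂B}`. -/
def SOp (h : ℝ) (B : Finset Lat8) (f : Lat8 → Oct) (y : Lat8) : Oct :=
  (2:ℝ) • ∑ x ∈ bdryF B, sfun h B x • Kstar h B x y (f x - f y) + f y

/-- The discrete Plemelj projection `P^h_{∂B}`. -/
def POp (h : ℝ) (B : Finset Lat8) (f : Lat8 → Oct) (y : Lat8) : Oct :=
  (2:ℝ)⁻¹ • (f y + SOp h B f y)

/-- The discrete Plemelj projection `Q^h_{∂B}`. -/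
def QOp (h : ℝ) (B : Finset Lat8) (f : Lat8 → Oct) (y : Lat8) : Oct :=
  (2:ℝ)⁻¹ • (f y - SOp h B f y)

/-- `g` vanishes at infinity on the lattice `ℤ^8_h`. -/
def VanishesAtInfty (h : ℝ) (g : Lat8 → Oct) : Prop :=
  ∀ ε > (0:ℝ), ∃ R > (0:ℝ), ∀ y : Lat8, R < ‖toOct h y‖ → ‖g y‖ < ε

open scoped Classical in
/-- The continuous fundamental solution `E(x) = (3/π⁴) x̄ / ‖x‖⁸`, with `E(0) = 0`. -/
def Econt (z : Oct) : Oct :=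
  if z = 0 then 0 else ((3 / Real.pi^4) * (‖z‖^8)⁻¹) • octConj z

/-- The weight `ω(x) = Π_l (1 + 2 cos(π x_l))` on the unit lattice. -/
def omegaFun (x : Lat8) : ℝ := ∏ l : Fin 8, (1 + 2 * Real.cos (Real.pi * (x l : ℝ)))

/-- The continuous Dirac operator `D`. -/
def DiracC (F : Oct → Oct) (x : Oct) : Oct :=
  ∑ l : Fin 8, octMul (octBasis l) (fderiv ℝ F x (octBasis l))

/-- Convergence of discrete sets `B^h ⊆ ℤ^8_h` to a bounded open set `B ⊆ ℝ^8`. -/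
def ConvergesTo (Bh : ℝ → Set Lat8) (B : Set Oct) : Prop :=
  ∀ ε > (0:ℝ), ∃ δ > (0:ℝ), ∀ h : ℝ, 0 < h → h < δ →
    (∀ a ∈ frontier B, ∃ b ∈ dBdryS (Bh h), dist a (toOct h b) ≤ ε) ∧
    (∀ b ∈ dBdryS (Bh h), ∃ a ∈ frontier B, dist (toOct h b) a ≤ ε) ∧
    (∀ a ∈ closure B, ∃ b ∈ Bh h, dist a (toOct h b) ≤ ε) ∧
    (∀ b ∈ Bh h, ∃ a ∈ closure B, dist (toOct h b) a ≤ ε)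

/-- The rate condition `B = B^h + O(h²)`, i.e. `h^8 · #(B^h ∖ B) = O(h²)` as `h → 0⁺`. -/
def RateO2 (Bh : ℝ → Set Lat8) (B : Set Oct) : Prop :=
  (fun h : ℝ => h^8 * ((Bh h \ {x : Lat8 | toOct h x ∈ B}).ncard : ℝ))
    =O[𝓝[>] (0:ℝ)] (fun h : ℝ => h^2)


section Aux

lemma abs_coord_le_norm (v : Oct) (k : Fin 8) : |v k| ≤ ‖v‖ := by
  rw [EuclideanSpace.norm_eq]
  have h1 : |v k| = Real.sqrt (|v k|^2) := by rw [Real.sqrt_sq_eq_abs, abs_abs]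
  rw [h1]
  apply Real.sqrt_le_sqrt
  have : |v k|^2 = ‖v k‖^2 := by rw [Real.norm_eq_abs]
  rw [this]
  exact Finset.single_le_sum (f := fun i => ‖v i‖^2) (fun i _ => by positivity) (Finset.mem_univ k)

lemma norm_le_three_mul (v : Oct) (M : ℝ) (hM : 0 ≤ M) (h : ∀ k, |v k| ≤ M) : ‖v‖ ≤ 3 * M := by
  rw [EuclideanSpace.norm_eq]
  have h2 : ∑ i : Fin 8, ‖v i‖^2 ≤ 8 * M^2 := by
    calc ∑ i : Fin 8, ‖v i‖^2 ≤ ∑ _i : Fin 8, M^2 := by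
          apply Finset.sum_le_sum
          intro i _
          rw [Real.norm_eq_abs]
          exact pow_le_pow_left₀ (abs_nonneg _) (h i) 2
      _ = 8 * M^2 := by rw [Finset.sum_const]; simp
  calc Real.sqrt (∑ i : Fin 8, ‖v i‖^2) ≤ Real.sqrt ((3*M)^2) := by
        apply Real.sqrt_le_sqrt; nlinarith
    _ = 3 * M := Real.sqrt_sq (by linarith)

lemma abs_structC_le (i j k : Fin 8) : |structC i j k| ≤ 1 := by
  unfold structC eps
  split_ifs <;> norm_num

lemma octMul_coord (a b : Oct) (k : Fin 8) :
    octMul a b k = ∑ i : Fin 8, ∑ j : Fin 8, a i * b j * structC i j k := rfl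

lemma octMul_norm_le (a b : Oct) : ‖octMul a b‖ ≤ 200 * ‖a‖ * ‖b‖ := by
  have key : ∀ k, |octMul a b k| ≤ 64 * (‖a‖ * ‖b‖) := by
    intro k
    rw [octMul_coord]
    calc |∑ i : Fin 8, ∑ j : Fin 8, a i * b j * structC i j k|
        ≤ ∑ i : Fin 8, |∑ j : Fin 8, a i * b j * structC i j k| := Finset.abs_sum_le_sum_abs _ _
      _ ≤ ∑ _i : Fin 8, ∑ _j : Fin 8, ‖a‖ * ‖b‖ := by
          apply Finset.sum_le_sum; intro i _
          calc |∑ j : Fin 8, a i * b j * structC i j k|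
              ≤ ∑ j : Fin 8, |a i * b j * structC i j k| := Finset.abs_sum_le_sum_abs _ _
            _ ≤ ∑ _j : Fin 8, ‖a‖ * ‖b‖ := by
                apply Finset.sum_le_sum; intro j _
                rw [abs_mul, abs_mul]
                have h1 := abs_coord_le_norm a i
                have h2 := abs_coord_le_norm b j
                have h3 := abs_structC_le i j k
                have hab : |a i| * |b j| ≤ ‖a‖ * ‖b‖ :=
                  mul_le_mul h1 h2 (abs_nonneg _) (norm_nonneg _)
                calc |a i| * |b j| * |structC i j k| ≤ (‖a‖ * ‖b‖) * 1 :=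
                      mul_le_mul hab h3 (abs_nonneg _) (by positivity)
                  _ = ‖a‖ * ‖b‖ := mul_one _
      _ = 64 * (‖a‖ * ‖b‖) := by rw [Finset.sum_const, Finset.sum_const]; simp; ring_nf
  have := norm_le_three_mul (octMul a b) (64 * (‖a‖ * ‖b‖)) (by positivity) key
  nlinarith [norm_nonneg a, norm_nonneg b]

lemma norm_octBasis (l : Fin 8) : ‖octBasis l‖ = 1 := by
  simp [octBasis, EuclideanSpace.norm_single]

/-- Octonion left multiplication as a linear map. -/
def octLinR (a : Oct) : Oct →ₗ[ℝ] Oct where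
  toFun := octMul a
  map_add' u v := by
    apply PiLp.ext; intro k
    show octMul a (u + v) k = octMul a u k + octMul a v k
    simp only [octMul_coord]
    rw [← Finset.sum_add_distrib]
    apply Finset.sum_congr rfl; intro i _
    rw [← Finset.sum_add_distrib]
    apply Finset.sum_congr rfl; intro j _
    have : (u + v) j = u j + v j := rfl
    rw [this]; ring
  map_smul' c v := by
    apply PiLp.ext; intro k
    show octMul a (c • v) k = c * octMul a v k
    simp only [octMul_coord]
    rw [Finset.mul_sum]
    apply Finset.sum_congr rfl; intro i _
    rw [Finset.mul_sum]
    apply Finset.sum_congr rfl; intro j _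
    have : (c • v) j = c * v j := rfl
    rw [this]; ring

lemma octMul_sub (a u v : Oct) : octMul a (u - v) = octMul a u - octMul a v :=
  map_sub (octLinR a) u v

lemma octMul_sum {ι : Type*} (a : Oct) (s : Finset ι) (g : ι → Oct) :
    octMul a (∑ i ∈ s, g i) = ∑ i ∈ s, octMul a (g i) :=
  map_sum (octLinR a) g s

lemma octMul_smul (a : Oct) (c : ℝ) (v : Oct) : octMul a (c • v) = c • octMul a v :=
  map_smul (octLinR a) c v

end Aux
section Aux2

lemma toOct_apply (h : ℝ) (x : Lat8) (k : Fin 8) : toOct h x k = h * (x k : ℝ) := rfl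

lemma toOct_add_unitL (h : ℝ) (y : Lat8) (l : Fin 8) :
    toOct h (y + unitL l) = toOct h y + h • octBasis l := by
  apply PiLp.ext; intro k
  have h1 : (toOct h y + h • octBasis l) k = toOct h y k + h * octBasis l k := rfl
  rw [h1, toOct_apply, toOct_apply]
  have h2 : (y + unitL l) k = y k + unitL l k := rfl
  rw [h2, unitL]
  have h3 : octBasis l k = if k = l then 1 else 0 := by
    simp [octBasis, EuclideanSpace.single_apply]
  rw [h3]
  split_ifs <;> push_cast <;> ring

lemma toOct_sub_unitL (h : ℝ) (y : Lat8) (l : Fin 8) :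
    toOct h (y - unitL l) = toOct h y - h • octBasis l := by
  apply PiLp.ext; intro k
  have h1 : (toOct h y - h • octBasis l) k = toOct h y k - h * octBasis l k := rfl
  rw [h1, toOct_apply, toOct_apply]
  have h2 : (y - unitL l) k = y k - unitL l k := rfl
  rw [h2, unitL]
  have h3 : octBasis l k = if k = l then 1 else 0 := by
    simp [octBasis, EuclideanSpace.single_apply]
  rw [h3]
  split_ifs <;> push_cast <;> ring

lemma mem_nbhdSet_self (x : Lat8) : x ∈ nbhdSet x := by
  left; rfl

lemma add_unitL_mem_nbhdSet (x : Lat8) (l : Fin 8) : x + unitL l ∈ nbhdSet x := by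
  right; exact Set.mem_iUnion.mpr ⟨l, by left; rfl⟩

lemma sub_unitL_mem_nbhdSet (x : Lat8) (l : Fin 8) : x - unitL l ∈ nbhdSet x := by
  right; exact Set.mem_iUnion.mpr ⟨l, by right; rfl⟩

/-- If a point is in `S` and not in the discrete boundary, all its neighbours are in `S`. -/
lemma nbhd_subset_of_not_bdry {S : Set Lat8} {b : Lat8} (hb : b ∈ S) (hnb : b ∉ dBdryS S) :
    ∀ z ∈ nbhdSet b, z ∈ S := by
  intro z hz
  by_contra hzS
  exact hnb ⟨⟨b, mem_nbhdSet_self b, hb⟩, ⟨z, hz, hzS⟩⟩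

/-- Filling lemma: walk from `b` to `y` through a boundary-free region. -/
lemma fill (S : Set Lat8) (y : Lat8) :
    ∀ n : ℕ, ∀ b : Lat8, (∑ i : Fin 8, (y i - b i).natAbs) = n → b ∈ S →
    (∀ z : Lat8, (∀ i, min (b i) (y i) ≤ z i ∧ z i ≤ max (b i) (y i)) → z ∉ dBdryS S) →
    y ∈ S := by
  intro n
  induction n with
  | zero =>
    intro b hsum hb _
    have : y = b := by
      funext i
      have h0 : (y i - b i).natAbs = 0 := by
        have := Finset.sum_eq_zero_iff.mp hsum i (Finset.mem_univ i)
        exact this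
      omega
    rw [this]; exact hb
  | succ n ih =>
    intro b hsum hb hreg
    have hbB : b ∉ dBdryS S := hreg b (fun i => ⟨min_le_left _ _, le_max_left _ _⟩)
    have hne : ∃ i, b i ≠ y i := by
      by_contra hc
      push_neg at hc
      have : (∑ i : Fin 8, (y i - b i).natAbs) = 0 := by
        apply Finset.sum_eq_zero; intro i _; rw [hc i]; simp
      omega
    obtain ⟨i, hi⟩ := hne
    rcases lt_or_gt_of_ne hi with hlt | hgt
    · -- b i < y i : step up
      set b' : Lat8 := b + unitL i with hb'
      have hb'S : b' ∈ S := nbhd_subset_of_not_bdry hb hbB _ (add_unitL_mem_nbhdSet b i)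
      have hcoord : ∀ j, b' j = if j = i then b j + 1 else b j := by
        intro j
        show b j + unitL i j = _
        rw [unitL]
        split_ifs with hj <;> simp [hj]
      apply ih b'
      · rw [← Finset.sum_erase_add _ _ (Finset.mem_univ i)] at hsum
        rw [← Finset.sum_erase_add _ _ (Finset.mem_univ i)]
        have e1 : ∑ j ∈ Finset.univ.erase i, (y j - b' j).natAbs
            = ∑ j ∈ Finset.univ.erase i, (y j - b j).natAbs := by
          apply Finset.sum_congr rfl; intro j hj
          rw [hcoord j, if_neg (Finset.ne_of_mem_erase hj)]
        rw [e1, hcoord i, if_pos rfl]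
        have : (y i - (b i + 1)).natAbs = (y i - b i).natAbs - 1 := by omega
        omega
      · exact hb'S
      · intro z hz
        apply hreg z
        intro j
        have := hz j
        rw [hcoord j] at this
        constructor
        · rcases this with ⟨h1, _⟩
          split_ifs at h1 with hj
          · subst hj; omega
          · omega
        · rcases this with ⟨_, h2⟩
          split_ifs at h2 with hj
          · subst hj; omega
          · omega
    · -- y i < b i : step down
      set b' : Lat8 := b - unitL i with hb'
      have hb'S : b' ∈ S := nbhd_subset_of_not_bdry hb hbB _ (sub_unitL_mem_nbhdSet b i)
      have hcoord : ∀ j, b' j = if j = i then b j - 1 else b j := by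
        intro j
        show b j - unitL i j = _
        rw [unitL]
        split_ifs with hj <;> simp [hj]
      apply ih b'
      · rw [← Finset.sum_erase_add _ _ (Finset.mem_univ i)] at hsum
        rw [← Finset.sum_erase_add _ _ (Finset.mem_univ i)]
        have e1 : ∑ j ∈ Finset.univ.erase i, (y j - b' j).natAbs
            = ∑ j ∈ Finset.univ.erase i, (y j - b j).natAbs := by
          apply Finset.sum_congr rfl; intro j hj
          rw [hcoord j, if_neg (Finset.ne_of_mem_erase hj)]
        rw [e1, hcoord i, if_pos rfl]
        have : (y i - (b i - 1)).natAbs = (y i - b i).natAbs - 1 := by omega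
        omega
      · exact hb'S
      · intro z hz
        apply hreg z
        intro j
        have := hz j
        rw [hcoord j] at this
        constructor
        · rcases this with ⟨h1, _⟩
          split_ifs at h1 with hj
          · subst hj; omega
          · omega
        · rcases this with ⟨_, h2⟩
          split_ifs at h2 with hj
          · subst hj; omega
          · omega

end Aux2
section Aux3

/-- The lattice box centred at `c` of half-width `m`, shifted by `v`. -/
def box (c : Lat8) (m : ℕ) (v : Lat8) : Finset Lat8 :=
  Fintype.piFinset fun i => Finset.Icc (c i - m + v i) (c i + m + v i)

lemma mem_box {c : Lat8} {m : ℕ} {v : Lat8} {y : Lat8} :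
    y ∈ box c m v ↔ ∀ i, c i - m + v i ≤ y i ∧ y i ≤ c i + m + v i := by
  simp [box, Fintype.mem_piFinset, Finset.mem_Icc]

lemma card_box (c : Lat8) (m : ℕ) (v : Lat8) : (box c m v).card = (2*m+1)^8 := by
  rw [box, Fintype.card_piFinset]
  have : ∀ i : Fin 8, (Finset.Icc (c i - m + v i) (c i + m + v i)).card = 2*m+1 := by
    intro i
    rw [Int.card_Icc]
    omega
  rw [Finset.prod_congr rfl (fun i _ => this i)]
  simp

lemma sum_box_shift {V : Type*} [AddCommMonoid V] (c : Lat8) (m : ℕ) (v : Lat8) (g : Lat8 → V) :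
    ∑ y ∈ box c m 0, g (y + v) = ∑ y ∈ box c m v, g y := by
  apply Finset.sum_nbij' (i := fun y => y + v) (j := fun y => y - v)
  · intro y hy
    rw [mem_box] at hy ⊢
    intro i
    have := hy i
    have h1 : (y + v) i = y i + v i := rfl
    have h2 : (0 : Lat8) i = 0 := rfl
    rw [h2] at this
    rw [h1]
    omega
  · intro y hy
    rw [mem_box] at hy ⊢
    intro i
    have := hy i
    have h1 : (y - v) i = y i - v i := rfl
    have h2 : (0 : Lat8) i = 0 := rfl
    rw [h1, h2]
    omega
  · intro y _; funext i; show y i + v i - v i = y i; ring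
  · intro y _; funext i; show y i - v i + v i = y i; ring
  · intro y _; rfl

lemma card_box_sdiff_le (c : Lat8) (m : ℕ) (l : Fin 8) (v w : Lat8)
    (hvw : ∀ i, i ≠ l → v i = w i) (hd : |v l - w l| ≤ 1) :
    ((box c m v) \ (box c m w)).card ≤ 2 * (2*m+1)^7 := by
  have hsub : (box c m v) \ (box c m w) ⊆
      Fintype.piFinset fun i =>
        if i = l then ({c l - m + v l, c l + m + v l} : Finset ℤ)
        else Finset.Icc (c i - m + v i) (c i + m + v i) := by
    intro y hy
    rw [Finset.mem_sdiff] at hy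
    obtain ⟨hyv, hyw⟩ := hy
    rw [mem_box] at hyv
    rw [Fintype.mem_piFinset]
    intro i
    split_ifs with hi
    · subst hi
      -- show y i is an endpoint
      have hviol : ¬ ∀ j, c j - m + w j ≤ y j ∧ y j ≤ c j + m + w j := by
        intro hc; exact hyw (mem_box.mpr hc)
      push_neg at hviol
      obtain ⟨j, hj⟩ := hviol
      have hjl : j = i := by
        by_contra hne
        have := hyv j
        rw [hvw j (by exact fun h => hne (h ▸ rfl))] at this
        rcases hj this.1 with h
        omega
      subst hjl
      have h1 := hyv j
      have hd' := abs_le.mp hd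
      simp only [Finset.mem_insert, Finset.mem_singleton]
      omega
    · exact Finset.mem_Icc.mpr (hyv i)
  calc ((box c m v) \ (box c m w)).card
      ≤ _ := Finset.card_le_card hsub
    _ ≤ 2 * (2*m+1)^7 := by
        rw [Fintype.card_piFinset]
        rw [← Finset.mul_prod_erase _ _ (Finset.mem_univ l)]
        rw [if_pos rfl]
        have h1 : ({c l - m + v l, c l + m + v l} : Finset ℤ).card ≤ 2 :=
          Finset.card_insert_le _ _ |>.trans (by simp)
        have h2 : ∏ i ∈ Finset.univ.erase l,
            (if i = l then ({c l - m + v l, c l + m + v l} : Finset ℤ)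
             else Finset.Icc (c i - m + v i) (c i + m + v i)).card = (2*m+1)^7 := by
          rw [Finset.prod_congr rfl (fun i hi => by
            rw [if_neg (Finset.ne_of_mem_erase hi), Int.card_Icc]
            )]
          have : ∀ i ∈ Finset.univ.erase l, (c i + m + v i + 1 - (c i - m + v i)).toNat = 2*m+1 := by
            intro i _; omega
          rw [Finset.prod_congr rfl this, Finset.prod_const, Finset.card_erase_of_mem (Finset.mem_univ l)]
          simp
        rw [h2]
        exact Nat.mul_le_mul_right _ h1

end Aux3
section Aux4

lemma cdiff_sub (h : ℝ) (p q : Lat8 → Oct) (l : Fin 8) (y : Lat8) :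
    cdiff h (fun z => p z - q z) l y = cdiff h p l y - cdiff h q l y := by
  simp only [cdiff, fdiff, bdiff]
  module

lemma DiracD_sub (h : ℝ) (p q : Lat8 → Oct) (y : Lat8) :
    DiracD h (fun z => p z - q z) y = DiracD h p y - DiracD h q y := by
  simp only [DiracD, cdiff_sub, octMul_sub, Finset.sum_sub_distrib]

lemma mem_box_coord_bound {c : Lat8} {m : ℕ} {v : Lat8} (hv : ∀ i, |v i| ≤ 1) {y : Lat8}
    (hy : y ∈ box c m v) : ∀ i, |y i - c i| ≤ (m:ℤ) + 1 := by
  intro i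
  have h1 := mem_box.mp hy i
  have h2 := abs_le.mp (hv i)
  rw [abs_le]
  omega

lemma abs_unitL_le (l : Fin 8) : ∀ i, |unitL l i| ≤ 1 := by
  intro i; rw [unitL]; split_ifs <;> norm_num

lemma abs_neg_unitL_le (l : Fin 8) : ∀ i, |(-unitL l) i| ≤ 1 := by
  intro i
  have : (-unitL l) i = -(unitL l i) := rfl
  rw [this, abs_neg]; exact abs_unitL_le l i

lemma abs_zero_le : ∀ i : Fin 8, |(0 : Lat8) i| ≤ 1 := by
  intro i; show |(0:ℤ)| ≤ 1; norm_num

/-- Bound on the sum over a box of the difference of shifted sums. -/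
lemma sum_box_diff_bound (c : Lat8) (m : ℕ) (g : Lat8 → Oct) (ε : ℝ)
    (l : Fin 8) (v w : Lat8) (hvw : ∀ i, i ≠ l → v i = w i) (hd : |v l - w l| ≤ 1)
    (hv : ∀ i, |v i| ≤ 1) (hw : ∀ i, |w i| ≤ 1)
    (hg : ∀ y : Lat8, (∀ i, |y i - c i| ≤ (m:ℤ) + 1) → ‖g y‖ ≤ ε) :
    ‖∑ y ∈ box c m v, g y - ∑ y ∈ box c m w, g y‖ ≤ 4 * (2*m+1)^7 * ε := by
  rw [← Finset.sum_sdiff_sub_sum_sdiff]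
  have hbound : ∀ (v' w' : Lat8), (∀ i, i ≠ l → v' i = w' i) → |v' l - w' l| ≤ 1 →
      (∀ i, |v' i| ≤ 1) →
      ‖∑ y ∈ box c m v' \ box c m w', g y‖ ≤ 2 * (2*m+1)^7 * ε := by
    intro v' w' hvw' hd' hv'
    have hcard := card_box_sdiff_le c m l v' w' hvw' hd'
    have hε : 0 ≤ ε := le_trans (norm_nonneg _) (hg c (fun i => by rw [sub_self, abs_zero]; positivity))
    calc ‖∑ y ∈ box c m v' \ box c m w', g y‖
        ≤ ∑ y ∈ box c m v' \ box c m w', ‖g y‖ := norm_sum_le _ _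
      _ ≤ ∑ _y ∈ box c m v' \ box c m w', ε := by
          apply Finset.sum_le_sum
          intro y hy
          exact hg y (mem_box_coord_bound hv' (Finset.mem_sdiff.mp hy).1)
      _ = (box c m v' \ box c m w').card * ε := by rw [Finset.sum_const, nsmul_eq_mul]
      _ ≤ (2 * (2*m+1)^7 : ℕ) * ε := by
          apply mul_le_mul_of_nonneg_right _ hε
          exact_mod_cast hcard
      _ = 2 * (2*m+1)^7 * ε := by push_cast; ring
  calc ‖∑ y ∈ box c m v \ box c m w, g y - ∑ y ∈ box c m w \ box c m v, g y‖
      ≤ ‖∑ y ∈ box c m v \ box c m w, g y‖ + ‖∑ y ∈ box c m w \ box c m v, g y‖ :=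
        norm_sub_le _ _
    _ ≤ 2 * (2*m+1)^7 * ε + 2 * (2*m+1)^7 * ε := by
        apply add_le_add
        · exact hbound v w hvw hd hv
        · exact hbound w v (fun i hi => (hvw i hi).symm) (by rw [abs_sub_comm] at hd; exact hd) hw
    _ = 4 * (2*m+1)^7 * ε := by ring

/-- Main quantitative bound: the box-sum of the discrete Dirac operator of `g`. -/
lemma sum_DiracD_bound (h : ℝ) (hh : 0 < h) (c : Lat8) (m : ℕ) (g : Lat8 → Oct) (ε : ℝ)
    (hg : ∀ y : Lat8, (∀ i, |y i - c i| ≤ (m:ℤ) + 1) → ‖g y‖ ≤ ε) :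
    ‖∑ y ∈ box c m 0, DiracD h g y‖ ≤ 6400 * h⁻¹ * (2*m+1)^7 * ε := by
  have hε : 0 ≤ ε := le_trans (norm_nonneg _) (hg c (fun i => by rw [sub_self, abs_zero]; positivity))
  have hswap : ∑ y ∈ box c m 0, DiracD h g y
      = ∑ l : Fin 8, octMul (octBasis l) (∑ y ∈ box c m 0, cdiff h g l y) := by
    simp only [DiracD]
    rw [Finset.sum_comm]
    apply Finset.sum_congr rfl
    intro l _
    rw [octMul_sum]
  rw [hswap]
  have hcd : ∀ l : Fin 8, ‖∑ y ∈ box c m 0, cdiff h g l y‖ ≤ h⁻¹ * (4 * (2*m+1)^7 * ε) := by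
    intro l
    have hfd : ∑ y ∈ box c m 0, fdiff h g l y
        = h⁻¹ • (∑ y ∈ box c m (unitL l), g y - ∑ y ∈ box c m 0, g y) := by
      simp only [fdiff]
      rw [← Finset.smul_sum]
      congr 1
      rw [Finset.sum_sub_distrib, sum_box_shift]
    have hbd : ∑ y ∈ box c m 0, bdiff h g l y
        = h⁻¹ • (∑ y ∈ box c m 0, g y - ∑ y ∈ box c m (-unitL l), g y) := by
      simp only [bdiff]
      rw [← Finset.smul_sum]
      congr 1
      rw [Finset.sum_sub_distrib]
      congr 1
      rw [← sum_box_shift c m (-unitL l) g]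
      apply Finset.sum_congr rfl
      intro y _
      have hy : y - unitL l = y + (-unitL l) := by
        funext i
        show y i - unitL l i = y i + -(unitL l i)
        ring
      rw [hy]
    have h1 : ‖∑ y ∈ box c m 0, fdiff h g l y‖ ≤ h⁻¹ * (4 * (2*m+1)^7 * ε) := by
      rw [hfd, norm_smul, Real.norm_eq_abs, abs_of_pos (inv_pos.mpr hh)]
      apply mul_le_mul_of_nonneg_left _ (le_of_lt (inv_pos.mpr hh))
      apply sum_box_diff_bound c m g ε l (unitL l) 0 _ _ (abs_unitL_le l) abs_zero_le hg
      · intro i hi; rw [unitL, if_neg hi]; rfl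
      · show |unitL l l - (0:Lat8) l| ≤ 1
        rw [unitL, if_pos rfl]; norm_num
    have h2 : ‖∑ y ∈ box c m 0, bdiff h g l y‖ ≤ h⁻¹ * (4 * (2*m+1)^7 * ε) := by
      rw [hbd, norm_smul, Real.norm_eq_abs, abs_of_pos (inv_pos.mpr hh)]
      apply mul_le_mul_of_nonneg_left _ (le_of_lt (inv_pos.mpr hh))
      apply sum_box_diff_bound c m g ε l 0 (-unitL l) _ _ abs_zero_le (abs_neg_unitL_le l) hg
      · intro i hi
        show (0:ℤ) = -(unitL l i)
        rw [unitL, if_neg hi]; ring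
      · show |(0:Lat8) l - (-unitL l) l| ≤ 1
        have : (-unitL l) l = -(unitL l l) := rfl
        rw [this, unitL, if_pos rfl]
        norm_num
    have : ∑ y ∈ box c m 0, cdiff h g l y
        = (2:ℝ)⁻¹ • (∑ y ∈ box c m 0, fdiff h g l y + ∑ y ∈ box c m 0, bdiff h g l y) := by
      simp only [cdiff]
      rw [← Finset.smul_sum, Finset.sum_add_distrib]
    rw [this, norm_smul, Real.norm_eq_abs]
    have h3 : ‖∑ y ∈ box c m 0, fdiff h g l y + ∑ y ∈ box c m 0, bdiff h g l y‖
        ≤ 2 * (h⁻¹ * (4 * (2*m+1)^7 * ε)) := by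
      calc _ ≤ ‖∑ y ∈ box c m 0, fdiff h g l y‖ + ‖∑ y ∈ box c m 0, bdiff h g l y‖ :=
            norm_add_le _ _
        _ ≤ _ := by linarith
    have h4 : |(2:ℝ)⁻¹| = 2⁻¹ := by norm_num
    rw [h4]
    calc (2:ℝ)⁻¹ * ‖_ + _‖ ≤ 2⁻¹ * (2 * (h⁻¹ * (4 * (2*m+1)^7 * ε))) := by
          apply mul_le_mul_of_nonneg_left h3 (by norm_num)
      _ = h⁻¹ * (4 * (2*m+1)^7 * ε) := by ring
  calc ‖∑ l : Fin 8, octMul (octBasis l) (∑ y ∈ box c m 0, cdiff h g l y)‖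
      ≤ ∑ l : Fin 8, ‖octMul (octBasis l) (∑ y ∈ box c m 0, cdiff h g l y)‖ := norm_sum_le _ _
    _ ≤ ∑ _l : Fin 8, 200 * (h⁻¹ * (4 * (2*m+1)^7 * ε)) := by
        apply Finset.sum_le_sum
        intro l _
        calc ‖octMul (octBasis l) (∑ y ∈ box c m 0, cdiff h g l y)‖
            ≤ 200 * ‖octBasis l‖ * ‖∑ y ∈ box c m 0, cdiff h g l y‖ := octMul_norm_le _ _
          _ = 200 * ‖∑ y ∈ box c m 0, cdiff h g l y‖ := by rw [norm_octBasis]; ring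
          _ ≤ 200 * (h⁻¹ * (4 * (2*m+1)^7 * ε)) := by
              apply mul_le_mul_of_nonneg_left (hcd l) (by norm_num)
    _ = 6400 * h⁻¹ * (2*m+1)^7 * ε := by
        rw [Finset.sum_const]
        simp
        ring

end Aux4
section Aux5

lemma norm_h_smul_octBasis (h : ℝ) (hh : 0 < h) (l : Fin 8) : ‖h • octBasis l‖ = h := by
  rw [norm_smul, Real.norm_eq_abs, abs_of_pos hh, norm_octBasis, mul_one]

/-- Pointwise comparison between the discrete Dirac of the restricted `f` and `DiracC f x`. -/
lemma pointwise_DiracD_bound (f : Oct → Oct) (x : Oct) (h : ℝ) (hh : 0 < h) (τ : ℝ)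
    (s : Set Oct) (hs : Convex ℝ s)
    (hder : ∀ z ∈ s, HasFDerivWithinAt f (fderiv ℝ f z) s z)
    (hF : ∀ z ∈ s, ‖fderiv ℝ f z - fderiv ℝ f x‖ ≤ τ)
    (y : Lat8) (hy : toOct h y ∈ s)
    (hyp : ∀ l : Fin 8, toOct h y + h • octBasis l ∈ s)
    (hym : ∀ l : Fin 8, toOct h y - h • octBasis l ∈ s) :
    ‖DiracC f x - DiracD h (fun z => f (toOct h z)) y‖ ≤ 1600 * τ := by
  set F := fderiv ℝ f with hFdef
  set g : Oct → Oct := fun z => f z - F x z with hgdef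
  have hmvt : ∀ u ∈ s, ∀ v ∈ s, ‖g u - g v‖ ≤ τ * ‖u - v‖ := by
    intro u hu v hv
    exact Convex.norm_image_sub_le_of_norm_hasFDerivWithin_le
      (f' := fun z => F z - F x)
      (fun z hz => ((hder z hz).sub ((F x).hasFDerivAt.hasFDerivWithinAt)))
      (fun z hz => hF z hz) hs hv hu
  have hτ : 0 ≤ τ := by
    have := hF (toOct h y) hy
    exact le_trans (norm_nonneg _) this
  set ft : Lat8 → Oct := fun z => f (toOct h z) with hft
  have hcd : ∀ l : Fin 8, ‖cdiff h ft l y - F x (octBasis l)‖ ≤ τ := by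
    intro l
    set b := toOct h y with hb
    have hfd : fdiff h ft l y - F x (octBasis l)
        = h⁻¹ • (g (b + h • octBasis l) - g b) := by
      have h1 : fdiff h ft l y = h⁻¹ • (f (b + h • octBasis l) - f b) := by
        rw [fdiff, hft]
        simp only []
        rw [toOct_add_unitL]
      have hFx : (F x) (b + h • octBasis l) = (F x) b + h • (F x) (octBasis l) := by
        rw [map_add, _root_.map_smul]
      simp only [hgdef]
      rw [h1, hFx]
      match_scalars <;> field_simp <;> ring
    have hbd : bdiff h ft l y - F x (octBasis l)
        = h⁻¹ • (g b - g (b - h • octBasis l)) := by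
      have h1 : bdiff h ft l y = h⁻¹ • (f b - f (b - h • octBasis l)) := by
        rw [bdiff, hft]
        simp only []
        rw [toOct_sub_unitL]
      have hFx : (F x) (b - h • octBasis l) = (F x) b - h • (F x) (octBasis l) := by
        rw [map_sub, _root_.map_smul]
      simp only [hgdef]
      rw [h1, hFx]
      match_scalars <;> field_simp <;> ring
    have hfd' : ‖fdiff h ft l y - F x (octBasis l)‖ ≤ τ := by
      rw [hfd, norm_smul, Real.norm_eq_abs, abs_of_pos (inv_pos.mpr hh)]
      have := hmvt (b + h • octBasis l) (hyp l) b hy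
      have h2 : ‖b + h • octBasis l - b‖ = h := by
        rw [add_sub_cancel_left, norm_h_smul_octBasis h hh]
      rw [h2] at this
      calc h⁻¹ * ‖g (b + h • octBasis l) - g b‖ ≤ h⁻¹ * (τ * h) :=
            mul_le_mul_of_nonneg_left this (le_of_lt (inv_pos.mpr hh))
        _ = τ := by field_simp
    have hbd' : ‖bdiff h ft l y - F x (octBasis l)‖ ≤ τ := by
      rw [hbd, norm_smul, Real.norm_eq_abs, abs_of_pos (inv_pos.mpr hh)]
      have := hmvt b hy (b - h • octBasis l) (hym l)
      have h2 : ‖b - (b - h • octBasis l)‖ = h := by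
        rw [sub_sub_cancel, norm_h_smul_octBasis h hh]
      rw [h2] at this
      calc h⁻¹ * ‖g b - g (b - h • octBasis l)‖ ≤ h⁻¹ * (τ * h) :=
            mul_le_mul_of_nonneg_left this (le_of_lt (inv_pos.mpr hh))
        _ = τ := by field_simp
    have : cdiff h ft l y - F x (octBasis l)
        = (2:ℝ)⁻¹ • ((fdiff h ft l y - F x (octBasis l)) + (bdiff h ft l y - F x (octBasis l))) := by
      rw [cdiff]
      module
    rw [this, norm_smul, Real.norm_eq_abs]
    have h4 : |(2:ℝ)⁻¹| = 2⁻¹ := by norm_num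
    rw [h4]
    calc (2:ℝ)⁻¹ * ‖_‖ ≤ 2⁻¹ * (τ + τ) := by
          apply mul_le_mul_of_nonneg_left _ (by norm_num)
          exact le_trans (norm_add_le _ _) (add_le_add hfd' hbd')
      _ = τ := by ring
  have hdecomp : DiracC f x - DiracD h ft y
      = ∑ l : Fin 8, octMul (octBasis l) (F x (octBasis l) - cdiff h ft l y) := by
    rw [DiracC, DiracD, ← Finset.sum_sub_distrib]
    apply Finset.sum_congr rfl
    intro l _
    rw [octMul_sub, hFdef]
  rw [hdecomp]
  calc ‖∑ l : Fin 8, octMul (octBasis l) (F x (octBasis l) - cdiff h ft l y)‖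
      ≤ ∑ l : Fin 8, ‖octMul (octBasis l) (F x (octBasis l) - cdiff h ft l y)‖ := norm_sum_le _ _
    _ ≤ ∑ _l : Fin 8, 200 * τ := by
        apply Finset.sum_le_sum
        intro l _
        calc ‖octMul (octBasis l) (F x (octBasis l) - cdiff h ft l y)‖
            ≤ 200 * ‖octBasis l‖ * ‖F x (octBasis l) - cdiff h ft l y‖ := octMul_norm_le _ _
          _ = 200 * ‖cdiff h ft l y - F x (octBasis l)‖ := by
              rw [norm_octBasis, norm_sub_rev]; ring
          _ ≤ 200 * τ := mul_le_mul_of_nonneg_left (hcd l) (by norm_num)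
    _ = 1600 * τ := by rw [Finset.sum_const]; simp; ring

end Aux5
set_option maxHeartbeats 2000000 in
/-- scaling limits of discrete regular functions are regular. -/
theorem scaling_limit_regular (B : Set Oct) (hopen : IsOpen B)
    (hbdd : Bornology.IsBounded B) (Bh : ℝ → Set Lat8) (hconv : ConvergesTo Bh B)
    (f : Oct → Oct) (hf : ContDiffOn ℝ 1 f B) (fh : ℝ → Lat8 → Oct)
    (hreg : ∀ h : ℝ, 0 < h → ∀ y ∈ dIntS (Bh h), DiracD h (fh h) y = 0)
    (happrox : ∀ ε > (0:ℝ), ∃ δ > (0:ℝ), ∀ h : ℝ, 0 < h → h < δ →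
      ∀ x ∈ Bh h, toOct h x ∈ B → ‖f (toOct h x) - fh h x‖ ≤ ε) :
    ∀ x ∈ B, DiracC f x = 0 := by
  intro x hx
  have main : ∀ η : ℝ, 0 < η → ‖DiracC f x‖ ≤ η := by
    intro η hη
    set τ := η / 3200 with hτdef
    have hτpos : 0 < τ := by positivity
    have hFcont : ContinuousOn (fderiv ℝ f) B :=
      hf.continuousOn_fderiv_of_isOpen hopen le_rfl
    have hFat : ContinuousAt (fderiv ℝ f) x := hFcont.continuousAt (hopen.mem_nhds hx)
    obtain ⟨δF, hδF, hδFprop⟩ := Metric.continuousAt_iff.mp hFat τ hτpos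
    obtain ⟨ρ, hρ, hball⟩ := Metric.isOpen_iff.mp hopen x hx
    set r := min ρ δF / 9 with hrdef
    have hr : 0 < r := by positivity
    have h8rδF : 8 * r < δF := by
      have h1 : min ρ δF ≤ δF := min_le_right _ _
      rw [hrdef]; linarith
    have hballB : Metric.closedBall x (8*r) ⊆ B := by
      intro z hz
      apply hball
      rw [Metric.mem_ball]
      have h2 := Metric.mem_closedBall.mp hz
      have h9 : 9 * r ≤ ρ := by rw [hrdef]; linarith [min_le_left ρ δF]
      linarith
    have hFτ : ∀ z ∈ Metric.closedBall x (8*r), ‖fderiv ℝ f z - fderiv ℝ f x‖ ≤ τ := by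
      intro z hz
      have h1 : dist z x < δF := lt_of_le_of_lt (Metric.mem_closedBall.mp hz) h8rδF
      have h2 := le_of_lt (hδFprop h1)
      rwa [dist_eq_norm] at h2
    have hder : ∀ z ∈ Metric.closedBall x (8*r),
        HasFDerivWithinAt f (fderiv ℝ f z) (Metric.closedBall x (8*r)) z := by
      intro z hz
      have hzB : z ∈ B := hballB hz
      exact ((hf.contDiffAt (hopen.mem_nhds hzB)).differentiableAt
        one_ne_zero).hasFDerivAt.hasFDerivWithinAt
    set ε₁ := η * r / 25600 with hε₁def
    have hε₁ : 0 < ε₁ := by positivity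
    obtain ⟨δ₁, hδ₁, hδ₁prop⟩ := happrox ε₁ hε₁
    obtain ⟨δ₂, hδ₂, hδ₂prop⟩ := hconv (r/2) (by positivity)
    set h := min (min δ₁ δ₂) r / 2 with hhdef
    have hh : 0 < h := by positivity
    have hhδ₁ : h < δ₁ := by
      rw [hhdef]; linarith [min_le_left (min δ₁ δ₂) r, min_le_left δ₁ δ₂]
    have hhδ₂ : h < δ₂ := by
      rw [hhdef]; linarith [min_le_left (min δ₁ δ₂) r, min_le_right δ₁ δ₂]
    have hhr : h ≤ r / 2 := by
      rw [hhdef]; linarith [min_le_right (min δ₁ δ₂) r]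
    obtain ⟨hcv1, hcv2, hcv3, hcv4⟩ := hδ₂prop h hh hhδ₂
    set c : Lat8 := fun i => ⌊x i / h⌋ with hcdef
    have hc : ∀ i, |h * ((c i : ℤ) : ℝ) - x i| ≤ h := by
      intro i
      have hci : (c i : ℤ) = ⌊x i / h⌋ := rfl
      have h1 : ((⌊x i / h⌋ : ℤ) : ℝ) ≤ x i / h := Int.floor_le _
      have h2 : x i / h < (⌊x i / h⌋ : ℤ) + 1 := Int.lt_floor_add_one _
      rw [hci]
      have h3 : ((⌊x i / h⌋ : ℤ) : ℝ) * h ≤ x i := by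
        rw [← le_div_iff₀ hh]; exact h1
      have h4 : x i < (((⌊x i / h⌋ : ℤ) : ℝ) + 1) * h := by
        rw [← div_lt_iff₀ hh]; exact h2
      rw [abs_le]; constructor <;> nlinarith
    set m := ⌊r / (2*h)⌋₊ with hmdef
    have hm1 : (m:ℝ) ≤ r/(2*h) := Nat.floor_le (by positivity)
    have hm2 : r/(2*h) < (m:ℝ) + 1 := Nat.lt_floor_add_one _
    have hhm : r / 2 < h * (2*(m:ℝ)+1) := by
      have h1 : r < ((m:ℝ)+1) * (2*h) := by
        rw [← div_lt_iff₀ (by positivity : (0:ℝ) < 2*h)]; exact hm2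
      nlinarith
    have hhm2 : h * ((m:ℝ)+1) ≤ r/2 + h := by
      have h1 : (m:ℝ) * (2*h) ≤ r := by
        rw [← le_div_iff₀ (by positivity : (0:ℝ) < 2*h)]; exact hm1
      nlinarith
    have hcoord : ∀ y : Lat8, (∀ i, |y i - c i| ≤ (m:ℤ) + 1) →
        ∀ i, |h * ((y i : ℤ):ℝ) - x i| ≤ 2*r := by
      intro y hy i
      have h1 := hc i
      have h2 : |((y i - c i : ℤ) : ℝ)| ≤ (m:ℝ)+1 := by exact_mod_cast hy i
      have h3 : |h * ((y i:ℤ):ℝ) - h * ((c i:ℤ):ℝ)| ≤ h * ((m:ℝ)+1) := by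
        have he : h * ((y i:ℤ):ℝ) - h * ((c i:ℤ):ℝ) = h * ((y i - c i : ℤ):ℝ) := by
          push_cast; ring
        rw [he, abs_mul, abs_of_pos hh]
        exact mul_le_mul_of_nonneg_left h2 hh.le
      calc |h * ((y i:ℤ):ℝ) - x i|
          ≤ |h * ((y i:ℤ):ℝ) - h * ((c i:ℤ):ℝ)| + |h * ((c i:ℤ):ℝ) - x i| := abs_sub_le _ _ _
        _ ≤ h * ((m:ℝ)+1) + h := add_le_add h3 h1
        _ ≤ (r/2 + h) + h := by linarith
        _ ≤ 2*r := by linarith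
    have hnorm : ∀ w : Lat8, (∀ i, |h * ((w i:ℤ):ℝ) - x i| ≤ 2*r) → ‖toOct h w - x‖ ≤ 6*r := by
      intro w hw
      have h3 := norm_le_three_mul (toOct h w - x) (2*r) (by positivity) (fun k => by
        have he : (toOct h w - x) k = h * ((w k:ℤ):ℝ) - x k := rfl
        rw [he]; exact hw k)
      linarith
    obtain ⟨b, hbBh, hbdist⟩ := hcv3 x (subset_closure hx)
    have hbcoord : ∀ i, |h * ((b i:ℤ):ℝ) - x i| ≤ 2*r := by
      intro i
      have h1 : |(x - toOct h b) i| ≤ ‖x - toOct h b‖ := abs_coord_le_norm _ i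
      have h2 : (x - toOct h b) i = x i - h * ((b i:ℤ):ℝ) := rfl
      rw [h2] at h1
      rw [abs_sub_comm]
      calc |x i - h * ((b i:ℤ):ℝ)| ≤ ‖x - toOct h b‖ := h1
        _ = dist x (toOct h b) := (dist_eq_norm _ _).symm
        _ ≤ r/2 := hbdist
        _ ≤ 2*r := by linarith
    have hregion : ∀ y : Lat8, (∀ i, |y i - c i| ≤ (m:ℤ)+1) →
        ∀ z : Lat8, (∀ i, min (b i) (y i) ≤ z i ∧ z i ≤ max (b i) (y i)) →
        z ∉ dBdryS (Bh h) := by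
      intro y hy z hz hzbd
      obtain ⟨a, hafr, hadist⟩ := hcv2 z hzbd
      have hzc : ∀ i, |h * ((z i:ℤ):ℝ) - x i| ≤ 2*r := by
        intro i
        have h1 := hbcoord i
        have h2 := hcoord y hy i
        have h3 := hz i
        have hl := min_le_iff.mp h3.1
        have hu := le_max_iff.mp h3.2
        rw [abs_le] at h1 h2 ⊢
        constructor
        · rcases hl with hcase | hcase
          · have hc1 : ((b i:ℤ):ℝ) ≤ ((z i:ℤ):ℝ) := by exact_mod_cast hcase
            have := mul_le_mul_of_nonneg_left hc1 hh.le
            linarith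
          · have hc1 : ((y i:ℤ):ℝ) ≤ ((z i:ℤ):ℝ) := by exact_mod_cast hcase
            have := mul_le_mul_of_nonneg_left hc1 hh.le
            linarith
        · rcases hu with hcase | hcase
          · have hc1 : ((z i:ℤ):ℝ) ≤ ((b i:ℤ):ℝ) := by exact_mod_cast hcase
            have := mul_le_mul_of_nonneg_left hc1 hh.le
            linarith
          · have hc1 : ((z i:ℤ):ℝ) ≤ ((y i:ℤ):ℝ) := by exact_mod_cast hcase
            have := mul_le_mul_of_nonneg_left hc1 hh.le
            linarith
      have hzB : ‖toOct h z - x‖ ≤ 6*r := hnorm z hzc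
      have haB : a ∈ B := by
        apply hballB
        rw [Metric.mem_closedBall]
        calc dist a x ≤ dist a (toOct h z) + dist (toOct h z) x := dist_triangle _ _ _
          _ ≤ r/2 + 6*r := by
              apply add_le_add
              · rw [dist_comm]; exact hadist
              · rw [dist_eq_norm]; exact hzB
          _ ≤ 8*r := by linarith
      have hanB : a ∉ B := by
        rw [hopen.frontier_eq] at hafr
        exact hafr.2
      exact hanB haB
    have hmem : ∀ y : Lat8, (∀ i, |y i - c i| ≤ (m:ℤ)+1) → y ∈ Bh h ∧ y ∉ dBdryS (Bh h) := by
      intro y hy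
      have hyBh : y ∈ Bh h :=
        fill (Bh h) y (∑ i : Fin 8, (y i - b i).natAbs) b rfl hbBh (hregion y hy)
      exact ⟨hyBh, hregion y hy y (fun i => ⟨min_le_right _ _, le_max_right _ _⟩)⟩
    have hginB : ∀ y : Lat8, (∀ i, |y i - c i| ≤ (m:ℤ)+1) → toOct h y ∈ B := by
      intro y hy
      apply hballB
      rw [Metric.mem_closedBall, dist_eq_norm]
      exact le_trans (hnorm y (hcoord y hy)) (by linarith)
    have herr : ∀ y : Lat8, (∀ i, |y i - c i| ≤ (m:ℤ)+1) → ‖f (toOct h y) - fh h y‖ ≤ ε₁ :=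
      fun y hy => hδ₁prop h hh hhδ₁ y (hmem y hy).1 (hginB y hy)
    have hboxbd : ∀ y ∈ box c m 0, ∀ i, |y i - c i| ≤ (m:ℤ)+1 :=
      fun y hy => mem_box_coord_bound abs_zero_le hy
    have hzero : ∀ y ∈ box c m 0, DiracD h (fh h) y = 0 := by
      intro y hy
      exact hreg h hh y ⟨(hmem y (hboxbd y hy)).1, (hmem y (hboxbd y hy)).2⟩
    set N : ℕ := (2*m+1)^8 with hNdef
    have hN : 0 < N := by positivity
    have hNcast : (N:ℝ) = (2*(m:ℝ)+1)^8 := by rw [hNdef]; push_cast; ring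
    have hNne : (N:ℝ) ≠ 0 := by positivity
    set ft : Lat8 → Oct := fun z => f (toOct h z) with hftdef
    have hkey : DiracC f x = (N:ℝ)⁻¹ • ∑ y ∈ box c m 0, (DiracC f x - DiracD h ft y)
        + (N:ℝ)⁻¹ • ∑ y ∈ box c m 0, DiracD h (fun z => ft z - fh h z) y := by
      rw [← smul_add, ← Finset.sum_add_distrib]
      have he : ∀ y ∈ box c m 0,
          (DiracC f x - DiracD h ft y) + DiracD h (fun z => ft z - fh h z) y = DiracC f x := by
        intro y hy
        rw [DiracD_sub, hzero y hy, sub_zero, sub_add_cancel]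
      rw [Finset.sum_congr rfl he, Finset.sum_const, card_box]
      rw [← Nat.cast_smul_eq_nsmul ℝ, smul_smul]
      rw [show ((2*m+1)^8 : ℕ) = N from rfl]
      rw [inv_mul_cancel₀ hNne, one_smul]
    have hptwise : ∀ y ∈ box c m 0, ‖DiracC f x - DiracD h ft y‖ ≤ 1600 * τ := by
      intro y hy
      apply pointwise_DiracD_bound f x h hh τ (Metric.closedBall x (8*r))
        (convex_closedBall x (8*r)) hder hFτ y
      · rw [Metric.mem_closedBall, dist_eq_norm]
        exact le_trans (hnorm y (hcoord y (hboxbd y hy))) (by linarith)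
      · intro l
        rw [← toOct_add_unitL, Metric.mem_closedBall, dist_eq_norm]
        have hy' : ∀ i, |(y + unitL l) i - c i| ≤ (m:ℤ)+1 := by
          intro i
          have h1 := mem_box.mp hy i
          have h0 : (0:Lat8) i = 0 := rfl
          rw [h0] at h1
          have h2 := abs_le.mp (abs_unitL_le l i)
          have h3 : (y + unitL l) i = y i + unitL l i := rfl
          rw [h3, abs_le]
          omega
        exact le_trans (hnorm _ (hcoord _ hy')) (by linarith)
      · intro l
        rw [← toOct_sub_unitL, Metric.mem_closedBall, dist_eq_norm]
        have hy' : ∀ i, |(y - unitL l) i - c i| ≤ (m:ℤ)+1 := by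
          intro i
          have h1 := mem_box.mp hy i
          have h0 : (0:Lat8) i = 0 := rfl
          rw [h0] at h1
          have h2 := abs_le.mp (abs_unitL_le l i)
          have h3 : (y - unitL l) i = y i - unitL l i := rfl
          rw [h3, abs_le]
          omega
        exact le_trans (hnorm _ (hcoord _ hy')) (by linarith)
    have hfirst : ‖(N:ℝ)⁻¹ • ∑ y ∈ box c m 0, (DiracC f x - DiracD h ft y)‖ ≤ η/2 := by
      rw [norm_smul, Real.norm_eq_abs, abs_of_nonneg (by positivity : (0:ℝ) ≤ (N:ℝ)⁻¹)]
      have hs1 : ‖∑ y ∈ box c m 0, (DiracC f x - DiracD h ft y)‖ ≤ (N:ℝ) * (1600 * τ) := by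
        calc ‖∑ y ∈ box c m 0, (DiracC f x - DiracD h ft y)‖
            ≤ ∑ y ∈ box c m 0, ‖DiracC f x - DiracD h ft y‖ := norm_sum_le _ _
          _ ≤ ∑ _y ∈ box c m 0, (1600 * τ) := Finset.sum_le_sum (fun y hy => hptwise y hy)
          _ = (N:ℝ) * (1600 * τ) := by
              rw [Finset.sum_const, card_box, nsmul_eq_mul]
      calc (N:ℝ)⁻¹ * ‖∑ y ∈ box c m 0, (DiracC f x - DiracD h ft y)‖
          ≤ (N:ℝ)⁻¹ * ((N:ℝ) * (1600 * τ)) := by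
            apply mul_le_mul_of_nonneg_left hs1 (by positivity)
        _ = 1600 * τ := by field_simp
        _ = η/2 := by rw [hτdef]; ring
    have hsecond : ‖(N:ℝ)⁻¹ • ∑ y ∈ box c m 0, DiracD h (fun z => ft z - fh h z) y‖ ≤ η/2 := by
      have hgb : ∀ y : Lat8, (∀ i, |y i - c i| ≤ (m:ℤ) + 1) → ‖ft y - fh h y‖ ≤ ε₁ :=
        fun y hy => herr y hy
      have hb1 := sum_DiracD_bound h hh c m (fun z => ft z - fh h z) ε₁ hgb
      rw [norm_smul, Real.norm_eq_abs, abs_of_nonneg (by positivity : (0:ℝ) ≤ (N:ℝ)⁻¹)]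
      set M := 2*(m:ℝ)+1 with hMdef
      have hM : 0 < M := by rw [hMdef]; positivity
      have hM0 : M ≠ 0 := ne_of_gt hM
      have hh0 : h ≠ 0 := ne_of_gt hh
      have e1 : (N:ℝ)⁻¹ * (6400 * h⁻¹ * M^7 * ε₁) = 6400 * ε₁ / (h * M) := by
        rw [hNcast]
        field_simp
      have e2 : 6400 * ε₁ / (h * M) ≤ 6400 * ε₁ / (r/2) := by
        apply div_le_div_of_nonneg_left (by positivity) (by positivity)
        exact le_of_lt hhm
      have e3 : 6400 * ε₁ / (r/2) = η/2 := by
        rw [hε₁def]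
        field_simp
        ring
      calc (N:ℝ)⁻¹ * ‖∑ y ∈ box c m 0, DiracD h (fun z => ft z - fh h z) y‖
          ≤ (N:ℝ)⁻¹ * (6400 * h⁻¹ * M^7 * ε₁) := by
            apply mul_le_mul_of_nonneg_left _ (by positivity)
            exact hb1
        _ = 6400 * ε₁ / (h * M) := e1
        _ ≤ 6400 * ε₁ / (r/2) := e2
        _ = η/2 := e3
    calc ‖DiracC f x‖
        = ‖(N:ℝ)⁻¹ • ∑ y ∈ box c m 0, (DiracC f x - DiracD h ft y)
          + (N:ℝ)⁻¹ • ∑ y ∈ box c m 0, DiracD h (fun z => ft z - fh h z) y‖ := by rw [← hkey]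
      _ ≤ ‖(N:ℝ)⁻¹ • ∑ y ∈ box c m 0, (DiracC f x - DiracD h ft y)‖
          + ‖(N:ℝ)⁻¹ • ∑ y ∈ box c m 0, DiracD h (fun z => ft z - fh h z) y‖ := norm_add_le _ _
      _ ≤ η/2 + η/2 := add_le_add hfirst hsecond
      _ = η := by ring
  by_contra hne
  have h0 : 0 < ‖DiracC f x‖ := norm_pos_iff.mpr hne
  have := main (‖DiracC f x‖/2) (by positivity)
  linarith

end
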